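/- Let N ≥ 2 and let a, b : Fin (N−1) → ℝ with a_j ≠ 0 and b_j ≠ 0 for every j. Let H_0 = Σ_{j=1}^{N−1} (a_j X_j X_{j+1} + b_j Y_j Y_{j+1}) be the XY chain Hamiltonian of length N (the XX chain is the case a_j = b_j), and consider the three local controls H_1 = Z_1, H_2 = X_1, H_3 = X_2 acting on the first two spins. Then the dynamical Lie algebra generated by H_0, H_1, H_2, H_3 equals su(2^N), the set of all traceless skew-Hermitian 2^N × 2^N complex matrices; i.e., the system is fully controllable. -/

import Mathlib

open Matrix Complex Finset

attribute [local instance 100] LieRing.ofAssociativeRing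

/-- The Pauli X matrix. -/
noncomputable def PauliX : Matrix (Fin 2) (Fin 2) ℂ := !![0, 1; 1, 0]
/-- The Pauli Y matrix. -/
noncomputable def PauliY : Matrix (Fin 2) (Fin 2) ℂ := !![0, -Complex.I; Complex.I, 0]
/-- The Pauli Z matrix. -/
noncomputable def PauliZ : Matrix (Fin 2) (Fin 2) ℂ := !![1, 0; 0, -1]

/-- Tensor product of `N` single-qubit matrices: the entry at `(x, y)` is `∏ j, (P j) (x j) (y j)`. -/
noncomputable def kronN {N : ℕ} (P : Fin N → Matrix (Fin 2) (Fin 2) ℂ) :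
    Matrix (Fin N → Fin 2) (Fin N → Fin 2) ℂ :=
  Matrix.of fun x y => ∏ j, P j (x j) (y j)

/-- The single-qubit operator `R` acting on site `k`, identity elsewhere. -/
noncomputable def localOp {N : ℕ} (k : Fin N) (R : Matrix (Fin 2) (Fin 2) ℂ) :
    Matrix (Fin N → Fin 2) (Fin N → Fin 2) ℂ :=
  kronN (fun m => if m = k then R else 1)

/-- The two-site operator with `R` at site `j`, `R'` at site `k`, identity elsewhere. -/
noncomputable def twoOp {N : ℕ} (j k : Fin N) (R R' : Matrix (Fin 2) (Fin 2) ℂ) :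
    Matrix (Fin N → Fin 2) (Fin N → Fin 2) ℂ :=
  kronN (fun m => if m = j then R else if m = k then R' else 1)

/-- Left site of the `j`-th bond of a chain of length `N`. -/
def siteL {N : ℕ} (j : Fin (N - 1)) : Fin N := ⟨j.val, by have := j.isLt; omega⟩
/-- Right site of the `j`-th bond of a chain of length `N`. -/
def siteR {N : ℕ} (j : Fin (N - 1)) : Fin N := ⟨j.val + 1, by have := j.isLt; omega⟩

/-- The XYZ chain Hamiltonian of length `N` with couplings `a b c : Fin (N-1) → ℝ`:
`H₀ = Σ_j (a_j X_j X_{j+1} + b_j Y_j Y_{j+1} + c_j Z_j Z_{j+1})`. -/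
noncomputable def xyzChain (N : ℕ) (a b c : Fin (N - 1) → ℝ) :
    Matrix (Fin N → Fin 2) (Fin N → Fin 2) ℂ :=
  ∑ j : Fin (N - 1),
    ((a j : ℂ) • twoOp (siteL j) (siteR j) PauliX PauliX +
     (b j : ℂ) • twoOp (siteL j) (siteR j) PauliY PauliY +
     (c j : ℂ) • twoOp (siteL j) (siteR j) PauliZ PauliZ)

/-- The XX chain Hamiltonian of length `N` with couplings `γ : Fin (N-1) → ℝ`:
`H₀ = Σ_j γ_j (X_j X_{j+1} + Y_j Y_{j+1})`. -/
noncomputable def xxChain (N : ℕ) (γ : Fin (N - 1) → ℝ) :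
    Matrix (Fin N → Fin 2) (Fin N → Fin 2) ℂ :=
  ∑ j : Fin (N - 1),
    (γ j : ℂ) • (twoOp (siteL j) (siteR j) PauliX PauliX +
                 twoOp (siteL j) (siteR j) PauliY PauliY)


/-!
A Pauli string up to phase is a vector of `𝔽₂²`-labels, the label of `X^x Z^z` being `(x, z)`;
the product of two strings has the sum of their labels, and they anticommute exactly when the
symplectic form `symp` of their labels is `1`. If `i P` and `i Q` lie in a real Lie algebra of
matrices and `P`, `Q` anticommute, then `[i P, i Q] = ±2 i P Q` puts `i (P Q)` in it as well, so the
labels of the strings in the dynamical Lie algebra are closed under adding anticommuting pairs.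

From `Z₁` and `X₁` we get `Y₁`, and the commutators of `X₁`, `Y₁` with `H₀` give `Z₁ Y₂` and
`Z₁ X₂` (here `b₁ ≠ 0`, `a₁ ≠ 0`). Together with `X₂` this yields all fifteen non-identity strings
on the first bond. Inductively, once the bond `(k - 1, k)` is full, the commutators of `X_k`, `Y_k`
with `H₀` contain `Z_k Y_{k+1}`, `Z_k X_{k+1}` plus a term on the previous bond, and a few
brackets through site `k - 1` produce `Z_k Z_{k+1}`; the new bond is then full as before.
Strings on all bonds generate every non-identity Pauli string, and `i` times these span `su(2^N)`.
-/

abbrev PauliLabel := ZMod 2 × ZMod 2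

namespace PauliLabel

def X : PauliLabel := (1, 0)
def Y : PauliLabel := (1, 1)
def Z : PauliLabel := (0, 1)

protected def symp (v w : PauliLabel) : ZMod 2 := v.1 * w.2 + v.2 * w.1

@[simp] protected theorem zero_symp (v : PauliLabel) : (0 : PauliLabel).symp v = 0 := by
  simp [PauliLabel.symp]

@[simp] protected theorem symp_zero (v : PauliLabel) : v.symp 0 = 0 := by
  simp [PauliLabel.symp]

protected theorem symp_self : ∀ v : PauliLabel, v.symp v = 0 := by decide

protected theorem add_symp (u v w : PauliLabel) : (u + v).symp w = u.symp w + v.symp w := by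
  simp only [PauliLabel.symp, Prod.fst_add, Prod.snd_add]
  ring

protected theorem cases : ∀ v : PauliLabel, v = 0 ∨ v = X ∨ v = Y ∨ v = Z := by decide

protected theorem exists_add_eq_of_ne_zero :
    ∀ v : PauliLabel, v ≠ 0 → ∃ a b : PauliLabel, a + b = v ∧ a.symp b = 1 := by
  decide

protected theorem sum_univ {M : Type*} [AddCommMonoid M] (f : PauliLabel → M) :
    ∑ v, f v = f 0 + f X + f Y + f Z := by
  have h (g : ZMod 2 → M) : ∑ a, g a = g 0 + g 1 := Fin.sum_univ_two g
  simp only [Fintype.sum_prod_type, h, X, Y, Z, Prod.mk_zero_zero]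
  abel

end PauliLabel

open PauliLabel

def symp {ι : Type*} [Fintype ι] (s t : ι → PauliLabel) : ZMod 2 := ∑ i, (s i).symp (t i)

@[simp] theorem zero_symp {ι : Type*} [Fintype ι] (t : ι → PauliLabel) : symp 0 t = 0 := by
  simp [symp]

theorem symp_add_left {ι : Type*} [Fintype ι] (s s' t : ι → PauliLabel) :
    symp (s + s') t = symp s t + symp s' t := by
  simp only [symp, Pi.add_apply, PauliLabel.add_symp, sum_add_distrib]

def IsAnticommClosed {ι : Type*} [Fintype ι] (G : Set (ι → PauliLabel)) : Prop :=
  ∀ ⦃s t⦄, s ∈ G → t ∈ G → symp s t = 1 → s + t ∈ G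

theorem IsAnticommClosed.mem_of_add_eq {ι : Type*} [Fintype ι] {T : Set (ι → PauliLabel)}
    (hT : IsAnticommClosed T) {x y z : ι → PauliLabel} (hx : x ∈ T) (hy : y ∈ T)
    (h : symp x y = 1 ∧ x + y = z) : z ∈ T :=
  h.2 ▸ hT hx hy h.1

theorem injective_pair {κ : Type*} {a b : κ} (hab : a ≠ b) : Function.Injective ![a, b] := by
  intro i j h
  fin_cases i <;> fin_cases j <;> simp_all [eq_comm]

theorem injective_triple {κ : Type*} {a b c : κ} (hab : a ≠ b) (hac : a ≠ c) (hbc : b ≠ c) :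
    Function.Injective ![a, b, c] := by
  intro i j h
  fin_cases i <;> fin_cases j <;> simp_all [eq_comm]

section Embed

variable {ι κ : Type*} [Fintype ι] [DecidableEq κ]

def embed (e : ι → κ) (x : ι → PauliLabel) : κ → PauliLabel := ∑ i, Pi.single (e i) (x i)

def IsFullOn (G : Set (κ → PauliLabel)) (e : ι → κ) : Prop := ∀ x, x ≠ 0 → embed e x ∈ G

theorem embed_apply {e : ι → κ} (he : e.Injective) (x : ι → PauliLabel) (i : ι) :
    embed e x (e i) = x i := by
  rw [embed, Finset.sum_apply, Finset.sum_eq_single i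
    (fun j _ hj => Pi.single_eq_of_ne (he.ne hj.symm) _) (by simp), Pi.single_eq_same]

theorem embed_apply_of_notMem_range {e : ι → κ} (x : ι → PauliLabel) {m : κ}
    (hm : m ∉ Set.range e) : embed e x m = 0 := by
  simp only [embed, Finset.sum_apply, Pi.single_apply]
  exact sum_eq_zero fun i _ => if_neg fun h => hm ⟨i, h.symm⟩

theorem embed_add (e : ι → κ) (x y : ι → PauliLabel) :
    embed e (x + y) = embed e x + embed e y := by
  simp only [embed, Pi.add_apply, Pi.single_add, sum_add_distrib]

theorem embed_ne_zero {e : ι → κ} (he : e.Injective) {x : ι → PauliLabel} (hx : x ≠ 0) :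
    embed e x ≠ 0 := by
  obtain ⟨i, hi⟩ := Function.ne_iff.mp hx
  exact Function.ne_iff.mpr ⟨e i, by simpa [embed_apply he] using hi⟩

theorem embed_pair (a b : κ) (p q : PauliLabel) :
    embed ![a, b] ![p, q] = Pi.single a p + Pi.single b q := by
  simp [embed, Fin.sum_univ_two]

theorem embed_triple (a b c : κ) (p q r : PauliLabel) :
    embed ![a, b, c] ![p, q, r] = Pi.single a p + Pi.single b q + Pi.single c r := by
  simp [embed, Fin.sum_univ_three]

variable [Fintype κ]

theorem symp_embed {e : ι → κ} (he : e.Injective) (s : κ → PauliLabel) (y : ι → PauliLabel) :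
    symp s (embed e y) = symp (s ∘ e) y :=
  (Fintype.sum_of_injective e he _ _
    (fun m hm => by rw [embed_apply_of_notMem_range y hm, PauliLabel.symp_zero])
    fun i => by rw [Function.comp_apply, embed_apply he]).symm

theorem symp_embed_pair {a b : κ} (hab : a ≠ b) (s : κ → PauliLabel) (p q : PauliLabel) :
    symp s (embed ![a, b] ![p, q]) = (s a).symp p + (s b).symp q := by
  rw [symp_embed (injective_pair hab), symp, Fin.sum_univ_two]
  rfl

theorem IsAnticommClosed.add_embed_mem {G : Set (κ → PauliLabel)} (hG : IsAnticommClosed G)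
    {e : ι → κ} (he : e.Injective) {c : κ → PauliLabel} (hc : ∀ i, c (e i) = 0)
    {x y : ι → PauliLabel} (hx : c + embed e x ∈ G) (hy : embed e y ∈ G)
    (hxy : symp x y = 1) : c + embed e (x + y) ∈ G := by
  have hce : c ∘ e = 0 := funext hc
  have hxe : embed e x ∘ e = x := funext (embed_apply he x)
  have h : symp (c + embed e x) (embed e y) = 1 := by
    rw [symp_add_left, symp_embed he, symp_embed he, hce, hxe, zero_symp, zero_add, hxy]
  simpa only [embed_add, add_assoc] using hG hx hy h

theorem IsAnticommClosed.preimage_embed {G : Set (κ → PauliLabel)} (hG : IsAnticommClosed G)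
    {e : ι → κ} (he : e.Injective) : IsAnticommClosed (embed e ⁻¹' G) := fun x y hx hy hxy => by
  simpa using hG.add_embed_mem he (c := 0) (fun _ => rfl) (by simpa using hx) hy hxy

end Embed

theorem IsAnticommClosed.forall_mem_of_two_sites {T : Set (Fin 2 → PauliLabel)}
    (hT : IsAnticommClosed T) (hX : ![X, 0] ∈ T) (hZ : ![Z, 0] ∈ T) (hZX : ![Z, X] ∈ T)
    (hZY : ![Z, Y] ∈ T) (hZZ : ![Z, Z] ∈ T) : ∀ x, x ≠ 0 → x ∈ T := by
  have hY : ![Y, 0] ∈ T := hT.mem_of_add_eq hZ hX (by decide)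
  have h0Z : ![0, Z] ∈ T := hT.mem_of_add_eq hZX hZY (by decide)
  have h0X : ![0, X] ∈ T := hT.mem_of_add_eq hZY hZZ (by decide)
  have h0Y : ![0, Y] ∈ T := hT.mem_of_add_eq hZX hZZ (by decide)
  have hYX : ![Y, X] ∈ T := hT.mem_of_add_eq hZX hX (by decide)
  have hXX : ![X, X] ∈ T := hT.mem_of_add_eq hZX hY (by decide)
  have hYY : ![Y, Y] ∈ T := hT.mem_of_add_eq hZY hX (by decide)
  have hXY : ![X, Y] ∈ T := hT.mem_of_add_eq hZY hY (by decide)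
  have hYZ : ![Y, Z] ∈ T := hT.mem_of_add_eq hZZ hX (by decide)
  have hXZ : ![X, Z] ∈ T := hT.mem_of_add_eq hZZ hY (by decide)
  intro x hx
  have hx' : x = ![x 0, x 1] := by funext i; fin_cases i <;> rfl
  rw [hx'] at hx ⊢
  rcases (x 0).cases with h0 | h0 | h0 | h0 <;> rcases (x 1).cases with h1 | h1 | h1 | h1 <;>
    rw [h0, h1] at hx ⊢ <;> first | exact (hx (by decide)).elim | assumption

theorem IsAnticommClosed.mem_ZZ_of_three_sites {T : Set (Fin 3 → PauliLabel)}
    (hT : IsAnticommClosed T) (hXX : ![X, X, 0] ∈ T) (hYX : ![Y, X, 0] ∈ T)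
    (hZY : ![Z, Y, 0] ∈ T) (hX : ![0, X, 0] ∈ T) (hZX' : ![0, Z, X] ∈ T)
    (hZY' : ![0, Z, Y] ∈ T) : ![0, Z, Z] ∈ T := by
  have hYY' : ![0, Y, Y] ∈ T := hT.mem_of_add_eq hZY' hX (by decide)
  have hXYX : ![X, Y, X] ∈ T := hT.mem_of_add_eq hXX hZX' (by decide)
  have hX0Z : ![X, 0, Z] ∈ T := hT.mem_of_add_eq hXYX hYY' (by decide)
  have hZXZ : ![Z, X, Z] ∈ T := hT.mem_of_add_eq hX0Z hYX (by decide)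
  exact hT.mem_of_add_eq hZXZ hZY (by decide)

theorem forall_mem_of_two_site_moves {T : Set (Fin 2 → PauliLabel)} (hbase : ∀ p, ![p, 0] ∈ T)
    (hmove : ∀ x ∈ T, ∀ y, y ≠ 0 → symp x y = 1 → x + y ∈ T) : ∀ x, x ∈ T := by
  have hfirst (p q : PauliLabel) (hp : p ≠ 0) : ![p, q] ∈ T := by
    obtain ⟨a, b, rfl, hab⟩ := PauliLabel.exists_add_eq_of_ne_zero p hp
    have hb : ![b, q] ≠ 0 := by
      intro h
      rw [show b = 0 from congrFun h 0, PauliLabel.symp_zero] at hab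
      exact zero_ne_one hab
    convert hmove _ (hbase a) _ hb (by simp [symp, Fin.sum_univ_two, hab]) using 1
    funext i; fin_cases i <;> simp
  intro x
  have hx : x = ![x 0, x 1] := by funext i; fin_cases i <;> rfl
  rw [hx]
  by_cases h0 : x 0 = 0
  · by_cases h1 : x 1 = 0
    · rw [h0, h1]; exact hbase 0
    obtain ⟨c, d, hcd, hcd'⟩ := PauliLabel.exists_add_eq_of_ne_zero (x 1) h1
    convert hmove _ (hfirst Z c (by decide)) ![Z, d] (Function.ne_iff.mpr ⟨0, by simp [Z]⟩)
      (by simp [symp, Fin.sum_univ_two, hcd', PauliLabel.symp_self]) using 1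
    funext i; fin_cases i
    · simp [h0, show Z + Z = 0 by decide]
    · simp [hcd]
  · exact hfirst _ _ h0

/-- Write `s = c + (s a, s b)` with `c` vanishing at `a` and `b`. Starting from the pairs
`(p, 0)`, for which `s` is supported in `A`, brackets with the strings on `{a, b}` reach every
pair. -/
theorem IsAnticommClosed.mem_of_support_insert {κ : Type*} [Fintype κ] [DecidableEq κ]
    {G : Set (κ → PauliLabel)} (hG : IsAnticommClosed G) {A : Set κ} {a b : κ} (ha : a ∈ A)
    (hb : b ∉ A) (hA : ∀ s, s ≠ 0 → (∀ m ∉ A, s m = 0) → s ∈ G) (hab : IsFullOn G ![a, b]) :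
    ∀ s, s ≠ 0 → (∀ m ∉ insert b A, s m = 0) → s ∈ G := by
  intro s hs hsupp
  have hne : a ≠ b := fun h => hb (h ▸ ha)
  set c := Function.update (Function.update s a 0) b 0
  have hca : c a = 0 := by simp [c, hne]
  have hcb : c b = 0 := by simp [c]
  have hsplit : s = c + embed ![a, b] ![s a, s b] := by
    funext m
    rw [embed_pair]
    by_cases hma : m = a
    · subst hma; simp [hca, hne]
    by_cases hmb : m = b
    · subst hmb; simp [hcb, hma]
    · simp [c, hma, hmb]
  by_cases hc0 : c = 0
  · rw [hsplit, hc0, zero_add] at hs ⊢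
    exact hab _ fun h => hs (by rw [h]; simp [embed])
  suffices ∀ x, c + embed ![a, b] x ∈ G from hsplit ▸ this _
  refine forall_mem_of_two_site_moves (T := {x | c + embed ![a, b] x ∈ G}) (fun p => hA _ ?_ ?_)
    fun x hx y hy hxy => hG.add_embed_mem (injective_pair hne)
      (fun i => by fin_cases i <;> simpa) hx (hab y hy) hxy
  · obtain ⟨m, hm⟩ := Function.ne_iff.mp hc0
    have hma : m ≠ a := by rintro rfl; exact hm hca
    have hmb : m ≠ b := by rintro rfl; exact hm hcb
    exact Function.ne_iff.mpr ⟨m, by simpa [embed_pair, hma, hmb] using hm⟩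
  · intro m hm
    have hma : m ≠ a := by rintro rfl; exact hm ha
    by_cases hmb : m = b
    · subst hmb; simp [embed_pair, hcb, hne.symm]
    · simp [embed_pair, c, hma, hmb, hsupp m (by simp [hmb, hm])]

section Bonds

variable {N : ℕ}

def bondSites (j : Fin (N - 1)) : Fin 2 → Fin N := ![siteL j, siteR j]

theorem siteL_ne_siteR (j : Fin (N - 1)) : siteL j ≠ siteR j := by
  simp [siteL, siteR, Fin.ext_iff]

theorem siteL_injective : Function.Injective (siteL (N := N)) := by
  intro j k h
  simpa [siteL, Fin.ext_iff] using h

theorem embed_bondSites (j : Fin (N - 1)) (p q : PauliLabel) :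
    embed (bondSites j) ![p, q] = Pi.single (siteL j) p + Pi.single (siteR j) q :=
  embed_pair _ _ _ _

theorem embed_bondSites_zero_right (j : Fin (N - 1)) (p : PauliLabel) :
    embed (bondSites j) ![p, 0] = Pi.single (siteL j) p := by
  simp [embed_bondSites]

theorem embed_bondSites_zero_left (j : Fin (N - 1)) (q : PauliLabel) :
    embed (bondSites j) ![0, q] = Pi.single (siteR j) q := by
  simp [embed_bondSites]

theorem IsAnticommClosed.preimage_embed_bondSites {G : Set (Fin N → PauliLabel)}
    (hG : IsAnticommClosed G) (j : Fin (N - 1)) :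
    IsAnticommClosed (embed (bondSites j) ⁻¹' G) :=
  hG.preimage_embed (injective_pair (siteL_ne_siteR j))

theorem IsAnticommClosed.forall_mem_of_bonds (hN : 2 ≤ N) {G : Set (Fin N → PauliLabel)}
    (hG : IsAnticommClosed G) (hbond : ∀ j, IsFullOn G (bondSites j)) :
    ∀ s, s ≠ 0 → s ∈ G := by
  have key (q : ℕ) (hq : q < N) (s : Fin N → PauliLabel) (hs : s ≠ 0)
      (hsupp : ∀ m ∉ {m : Fin N | m.val ≤ q}, s m = 0) : s ∈ G := by
    induction q generalizing s with
    | zero =>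
      have hs' : s = embed (bondSites ⟨0, by omega⟩) ![s ⟨0, hq⟩, 0] := by
        rw [embed_bondSites_zero_right]
        funext m
        by_cases hm : m = ⟨0, hq⟩
        · subst hm; simp [siteL]
        · simp [siteL, hm, hsupp m (by simpa [Fin.ext_iff] using hm)]
      rw [hs'] at hs ⊢
      exact hbond _ _ fun h => hs (by rw [h]; simp [embed])
    | succ q ih =>
      refine hG.mem_of_support_insert (a := ⟨q, by omega⟩) (b := ⟨q + 1, hq⟩)
        (A := {m | m.val ≤ q}) (by simp) (by simp) (ih (by omega)) (hbond ⟨q, by omega⟩) s hs ?_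
      intro m hm
      refine hsupp m fun hle => hm ?_
      simp only [Set.mem_insert_iff, Set.mem_ofPred_eq, Fin.ext_iff] at hle ⊢
      omega
  intro s hs
  exact key (N - 1) (by omega) s hs fun m hm => absurd (by simp; omega) hm

end Bonds

noncomputable def pauli (v : PauliLabel) : Matrix (Fin 2) (Fin 2) ℂ :=
  if v = X then PauliX else if v = Y then PauliY else if v = Z then PauliZ else 1

@[simp] theorem pauli_zero : pauli 0 = 1 := rfl

/-- `XY = iZ`, `YZ = iX`, `ZX = iY`, and the reversed products carry `i³ = -i`. -/
def phaseExp (v w : PauliLabel) : ℕ :=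
  if (v, w) ∈ [(X, Y), (Y, Z), (Z, X)] then 1
  else if (w, v) ∈ [(X, Y), (Y, Z), (Z, X)] then 3 else 0

theorem pauli_mul_pauli (v w : PauliLabel) :
    pauli v * pauli w = I ^ phaseExp v w • pauli (v + w) := by
  fin_cases v <;> fin_cases w <;>
    · ext i j
      fin_cases i <;> fin_cases j <;>
        simp +decide [pauli, phaseExp, PauliX, PauliY, PauliZ, Matrix.mul_apply,
          Matrix.one_apply, Fin.sum_univ_two]

theorem natCast_phaseExp (v w : PauliLabel) : (phaseExp v w : ZMod 2) = v.symp w := by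
  revert v w; decide

theorem conjTranspose_pauli (v : PauliLabel) : (pauli v)ᴴ = pauli v := by
  fin_cases v <;>
    · ext i j
      fin_cases i <;> fin_cases j <;> simp +decide [pauli, PauliX, PauliY, PauliZ]

theorem trace_pauli (v : PauliLabel) : (pauli v).trace = if v = 0 then 2 else 0 := by
  fin_cases v <;> norm_num +decide [pauli, PauliX, PauliY, PauliZ, Matrix.trace, Fin.sum_univ_two]

theorem sum_pauli_apply_mul_pauli_apply (a b c d : Fin 2) :
    ∑ v, pauli v a b * pauli v c d = if a = d ∧ b = c then 2 else 0 := by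
  rw [PauliLabel.sum_univ]
  fin_cases a <;> fin_cases b <;> fin_cases c <;> fin_cases d <;>
    norm_num +decide [pauli, PauliX, PauliY, PauliZ, Matrix.one_apply]

theorem Complex.im_I_pow_eq_zero_iff (n : ℕ) : (I ^ n).im = 0 ↔ Even n := by
  obtain ⟨m, rfl | rfl⟩ := Nat.even_or_odd' n
  all_goals have h : (-1 : ℂ) ^ m = ((-1 : ℝ) ^ m : ℝ) := by push_cast; rfl
  · rw [pow_mul, I_sq, h, ofReal_im]
    simp
  · rw [pow_succ, pow_mul, I_sq, h, mul_I_im, ofReal_re]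
    simp

section PauliString

variable {N : ℕ}

theorem kronN_mul (P Q : Fin N → Matrix (Fin 2) (Fin 2) ℂ) :
    kronN P * kronN Q = kronN fun j => P j * Q j := by
  ext x y
  simp only [kronN, Matrix.mul_apply, Matrix.of_apply, Fintype.prod_sum, prod_mul_distrib]

theorem kronN_smul (c : Fin N → ℂ) (P : Fin N → Matrix (Fin 2) (Fin 2) ℂ) :
    kronN (fun j => c j • P j) = (∏ j, c j) • kronN P := by
  ext x y
  simp only [kronN, Matrix.of_apply, Matrix.smul_apply, smul_eq_mul, prod_mul_distrib]

theorem conjTranspose_kronN (P : Fin N → Matrix (Fin 2) (Fin 2) ℂ) :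
    (kronN P)ᴴ = kronN fun j => (P j)ᴴ := by
  ext x y
  simp only [kronN, Matrix.conjTranspose_apply, Matrix.of_apply, star_prod]

theorem trace_kronN (P : Fin N → Matrix (Fin 2) (Fin 2) ℂ) :
    (kronN P).trace = ∏ j, (P j).trace := by
  simp only [Matrix.trace, Matrix.diag, kronN, Matrix.of_apply, Fintype.prod_sum]

noncomputable def pauliString (s : Fin N → PauliLabel) :
    Matrix (Fin N → Fin 2) (Fin N → Fin 2) ℂ :=
  kronN fun j => pauli (s j)

def phaseSum (s t : Fin N → PauliLabel) : ℕ := ∑ j, phaseExp (s j) (t j)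

theorem pauliString_mul (s t : Fin N → PauliLabel) :
    pauliString s * pauliString t = I ^ phaseSum s t • pauliString (s + t) := by
  simp only [pauliString, kronN_mul, pauli_mul_pauli, kronN_smul, prod_pow_eq_pow_sum, phaseSum,
    Pi.add_apply]

theorem conjTranspose_pauliString (s : Fin N → PauliLabel) :
    (pauliString s)ᴴ = pauliString s := by
  simp only [pauliString, conjTranspose_kronN, conjTranspose_pauli]

theorem trace_pauliString {s : Fin N → PauliLabel} (hs : s ≠ 0) :
    (pauliString s).trace = 0 := by
  obtain ⟨j, hj⟩ := Function.ne_iff.mp hs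
  rw [pauliString, trace_kronN]
  exact prod_eq_zero (mem_univ j) (by simpa [trace_pauli] using hj)

theorem pauliString_zero : pauliString (0 : Fin N → PauliLabel) = 1 := by
  ext x y
  simp [pauliString, kronN, Matrix.one_apply, prod_boole, funext_iff]

theorem localOp_pauli (k : Fin N) (p : PauliLabel) :
    localOp k (pauli p) = pauliString (Pi.single k p) := by
  unfold localOp pauliString
  congr 1
  funext m
  by_cases h : m = k
  · simp [h]
  · simp [h]

theorem twoOp_pauli {j k : Fin N} (hjk : j ≠ k) (p q : PauliLabel) :
    twoOp j k (pauli p) (pauli q) = pauliString (embed ![j, k] ![p, q]) := by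
  unfold twoOp pauliString
  congr 1
  funext m
  rw [embed_pair]
  by_cases hj : m = j
  · simp [hj, hjk]
  by_cases hk : m = k
  · simp [hk, hjk.symm]
  · simp [hj, hk]

theorem im_I_pow_phaseSum_eq_zero_iff (s t : Fin N → PauliLabel) :
    (I ^ phaseSum s t).im = 0 ↔ symp s t = 0 := by
  rw [Complex.im_I_pow_eq_zero_iff, ← ZMod.natCast_eq_zero_iff_even]
  simp only [phaseSum, symp, Nat.cast_sum, natCast_phaseExp]

theorem im_I_pow_phaseSum_ne_zero {s t : Fin N → PauliLabel} (h : symp s t = 1) :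
    (I ^ phaseSum s t).im ≠ 0 := by
  rw [Ne, im_I_pow_phaseSum_eq_zero_iff, h]
  decide

theorem lie_smul_I_pauliString (s t : Fin N → PauliLabel) :
    ⁅I • pauliString s, I • pauliString t⁆ =
      (-2 * (I ^ phaseSum s t).im) • (I • pauliString (s + t)) := by
  have hts : pauliString t * pauliString s = star (I ^ phaseSum s t) • pauliString (s + t) := by
    rw [← conjTranspose_pauliString (s + t), ← conjTranspose_smul, ← pauliString_mul,
      conjTranspose_mul, conjTranspose_pauliString, conjTranspose_pauliString]
  rw [Ring.lie_def, smul_mul_smul_comm, smul_mul_smul_comm, ← smul_sub, pauliString_mul, hts,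
    ← sub_smul, smul_smul, ← Complex.coe_smul, smul_smul, star_def, sub_conj]
  congr 1
  push_cast
  linear_combination (2 * ((I ^ phaseSum s t).im : ℂ) * I) * I_sq

def pauliSet (S : LieSubalgebra ℝ (Matrix (Fin N → Fin 2) (Fin N → Fin 2) ℂ)) :
    Set (Fin N → PauliLabel) :=
  {s | I • pauliString s ∈ S}

theorem single_mem_pauliSet_iff {S : LieSubalgebra ℝ (Matrix (Fin N → Fin 2) (Fin N → Fin 2) ℂ)}
    {k : Fin N} {p : PauliLabel} : Pi.single k p ∈ pauliSet S ↔ I • localOp k (pauli p) ∈ S := by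
  rw [localOp_pauli]
  rfl

theorem isAnticommClosed_pauliSet
    (S : LieSubalgebra ℝ (Matrix (Fin N → Fin 2) (Fin N → Fin 2) ℂ)) :
    IsAnticommClosed (pauliSet S) := by
  intro s t hs ht hst
  have h := S.lie_mem hs ht
  rw [lie_smul_I_pauliString] at h
  have hne : -2 * (I ^ phaseSum s t).im ≠ 0 :=
    mul_ne_zero (by norm_num) (im_I_pow_phaseSum_ne_zero hst)
  show I • pauliString (s + t) ∈ S
  simpa only [smul_smul, inv_mul_cancel₀ hne, one_smul] using
    S.smul_mem (-2 * (I ^ phaseSum s t).im)⁻¹ h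

/-- In `⁅i P_s, i ∑ c_i P_{t_i}⁆` only the `t_i` anticommuting with `s` survive, each as a nonzero
real multiple of `i P_{s + t_i}`. -/
theorem mem_pauliSet_of_lie_sum {ι : Type*} [Fintype ι] [DecidableEq ι]
    {S : LieSubalgebra ℝ (Matrix (Fin N → Fin 2) (Fin N → Fin 2) ℂ)} {c : ι → ℝ}
    {t : ι → Fin N → PauliLabel} {s : Fin N → PauliLabel}
    (hH : I • ∑ i, (c i : ℂ) • pauliString (t i) ∈ S) (hs : s ∈ pauliSet S) {i₀ : ι}
    (hc : c i₀ ≠ 0) (h₀ : symp s (t i₀) = 1)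
    (hrest : ∀ i ≠ i₀, symp s (t i) = 1 → s + t i ∈ pauliSet S) :
    s + t i₀ ∈ pauliSet S := by
  set r : ι → ℝ := fun i => c i * (-2 * (I ^ phaseSum s (t i)).im)
  have hbracket : ⁅I • pauliString s, I • ∑ i, (c i : ℂ) • pauliString (t i)⁆ =
      ∑ i, r i • (I • pauliString (s + t i)) := by
    rw [smul_sum, lie_sum]
    refine sum_congr rfl fun i _ => ?_
    rw [Complex.coe_smul, smul_comm I, lie_smul, lie_smul_I_pauliString, smul_smul]
  have hrest' : ∑ i ∈ {i₀}ᶜ, r i • (I • pauliString (s + t i)) ∈ S := by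
    refine sum_mem fun i hi => ?_
    by_cases h : symp s (t i) = 1
    · exact S.smul_mem _ (hrest i (by simpa using hi) h)
    · have h0 : symp s (t i) = 0 := by revert h; generalize symp s (t i) = x; decide +revert
      simp [r, (im_I_pow_phaseSum_eq_zero_iff s (t i)).mpr h0]
  have hmem := S.sub_mem (S.lie_mem hs hH) hrest'
  rw [hbracket, Fintype.sum_eq_add_sum_compl i₀, add_sub_cancel_right] at hmem
  have hr : r i₀ ≠ 0 :=
    mul_ne_zero hc (mul_ne_zero (by norm_num) (im_I_pow_phaseSum_ne_zero h₀))
  show I • pauliString (s + t i₀) ∈ S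
  simpa only [smul_smul, inv_mul_cancel₀ hr, one_smul] using S.smul_mem (r i₀)⁻¹ hmem

theorem sum_pauliString_apply_mul_apply (x y z w : Fin N → Fin 2) :
    ∑ s, pauliString s z w * pauliString s x y = if z = y ∧ w = x then 2 ^ N else 0 := by
  simp only [pauliString, kronN, Matrix.of_apply, ← prod_mul_distrib]
  rw [← Fintype.prod_sum fun j v => pauli v (z j) (w j) * pauli v (x j) (y j)]
  simp only [sum_pauli_apply_mul_pauli_apply, prod_ite_zero, prod_const, card_univ,
    Fintype.card_fin, funext_iff, forall_and, mem_univ, true_implies]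

theorem pauliString_expansion (M : Matrix (Fin N → Fin 2) (Fin N → Fin 2) ℂ) :
    M = (2 ^ N : ℂ)⁻¹ • ∑ s, (pauliString s * M).trace • pauliString s := by
  ext x y
  simp only [Matrix.smul_apply, Matrix.sum_apply, Matrix.trace, Matrix.diag, Matrix.mul_apply,
    smul_eq_mul, sum_mul]
  have h : ∑ s, ∑ z, ∑ w, pauliString s z w * M w z * pauliString s x y =
      ∑ z, ∑ w, M w z * ∑ s, pauliString s z w * pauliString s x y := by
    simp_rw [mul_sum]
    rw [sum_comm]
    refine sum_congr rfl fun z _ => ?_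
    rw [sum_comm]
    exact sum_congr rfl fun w _ => sum_congr rfl fun s _ => by ring
  simp [h, sum_pauliString_apply_mul_apply, ite_and]
  field_simp

end PauliString

def su (n : Type*) [Fintype n] [DecidableEq n] : LieSubalgebra ℝ (Matrix n n ℂ) where
  carrier := {M | Mᴴ = -M ∧ M.trace = 0}
  add_mem' hA hB :=
    ⟨by rw [conjTranspose_add, hA.1, hB.1, neg_add], by rw [trace_add, hA.2, hB.2, add_zero]⟩
  zero_mem' := ⟨by simp, by simp⟩
  smul_mem' r A hA := ⟨by rw [conjTranspose_smul, hA.1, star_trivial, smul_neg],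
    by rw [trace_smul, hA.2, smul_zero]⟩
  lie_mem' {A B} hA hB := by
    refine ⟨?_, by rw [Ring.lie_def, trace_sub, trace_mul_comm, sub_self]⟩
    rw [Ring.lie_def, conjTranspose_sub, conjTranspose_mul, conjTranspose_mul, hA.1, hB.1]
    simp only [neg_mul_neg, neg_sub]

section SpecialUnitary

variable {N : ℕ}

theorem smul_I_pauliString_mem_su {s : Fin N → PauliLabel} (hs : s ≠ 0) :
    I • pauliString s ∈ su (Fin N → Fin 2) :=
  ⟨by rw [conjTranspose_smul, conjTranspose_pauliString, star_def, conj_I, neg_smul],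
    by rw [trace_smul, trace_pauliString hs, smul_zero]⟩

theorem mem_of_forall_smul_I_pauliString_mem
    {V : Submodule ℝ (Matrix (Fin N → Fin 2) (Fin N → Fin 2) ℂ)}
    (hV : ∀ s, s ≠ 0 → I • pauliString s ∈ V) {M : Matrix (Fin N → Fin 2) (Fin N → Fin 2) ℂ}
    (hM : Mᴴ = -M) (htr : M.trace = 0) : M ∈ V := by
  rw [pauliString_expansion M, show (2 ^ N : ℂ)⁻¹ = (((2 : ℝ) ^ N)⁻¹ : ℝ) by push_cast; rfl,
    Complex.coe_smul]
  refine V.smul_mem _ (sum_mem fun s _ => ?_)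
  by_cases hs : s = 0
  · simp [hs, pauliString_zero, htr]
  have hconj : star (pauliString s * M).trace = -(pauliString s * M).trace := by
    rw [← trace_conjTranspose, conjTranspose_mul, hM, conjTranspose_pauliString, Matrix.neg_mul,
      trace_neg, trace_mul_comm]
  have hre : (pauliString s * M).trace.re = 0 := by
    have h := congrArg re hconj
    simp only [star_def, conj_re, neg_re] at h
    linarith
  have htrace : (pauliString s * M).trace = ((pauliString s * M).trace.im : ℂ) * I := by
    apply Complex.ext <;> simp [hre]
  rw [htrace, ← smul_smul, Complex.coe_smul]
  exact V.smul_mem _ (hV s hs)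

theorem smul_I_localOp_pauli_mem_su (k : Fin N) {p : PauliLabel} (hp : p ≠ 0) :
    I • localOp k (pauli p) ∈ su (Fin N → Fin 2) := by
  rw [localOp_pauli]
  exact smul_I_pauliString_mem_su (by simpa using hp)

end SpecialUnitary

section Chain

variable {N : ℕ} {S : LieSubalgebra ℝ (Matrix (Fin N → Fin 2) (Fin N → Fin 2) ℂ)}

noncomputable def bondSum (α : Fin (N - 1) → ℝ) (p : PauliLabel) :
    Matrix (Fin N → Fin 2) (Fin N → Fin 2) ℂ :=
  ∑ j, (α j : ℂ) • pauliString (embed (bondSites j) ![p, p])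

theorem sum_twoOp_eq_bondSum (a b : Fin (N - 1) → ℝ) :
    ∑ j, ((a j : ℂ) • twoOp (siteL j) (siteR j) PauliX PauliX +
      (b j : ℂ) • twoOp (siteL j) (siteR j) PauliY PauliY) = bondSum a X + bondSum b Y := by
  simp only [bondSum, ← sum_add_distrib, bondSites, ← twoOp_pauli (siteL_ne_siteR _)]
  rfl

theorem smul_I_bondSum_mem_su (α : Fin (N - 1) → ℝ) {p : PauliLabel} (hp : p ≠ 0) :
    I • bondSum α p ∈ su (Fin N → Fin 2) := by
  rw [bondSum, smul_sum]
  refine sum_mem fun j _ => ?_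
  rw [Complex.coe_smul, smul_comm]
  exact (su _).smul_mem _ (smul_I_pauliString_mem_su (embed_ne_zero
    (injective_pair (siteL_ne_siteR j)) (Function.ne_iff.mpr ⟨0, by simpa using hp⟩)))

theorem mem_pauliSet_of_probe {α β : Fin (N - 1) → ℝ} {p q : PauliLabel} (hpq : p.symp q = 1)
    (hH : I • (bondSum α p + bondSum β q) ∈ S) {k : Fin (N - 1)} (hβ : β k ≠ 0)
    (hp : Pi.single (siteL k) p ∈ pauliSet S)
    (hprev : ∀ j, siteR j = siteL k → IsFullOn (pauliSet S) (bondSites j)) :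
    embed (bondSites k) ![p + q, q] ∈ pauliSet S := by
  set u := siteL k
  set s : Fin N → PauliLabel := Pi.single u p
  have hsymp (j : Fin (N - 1)) (r : PauliLabel) :
      symp s (embed (bondSites j) ![r, r]) = (s (siteL j)).symp r + (s (siteR j)).symp r := by
    rw [bondSites, symp_embed_pair (siteL_ne_siteR j)]
  have hq : q ≠ 0 := by rintro rfl; simp at hpq
  set t : Fin (N - 1) ⊕ Fin (N - 1) → Fin N → PauliLabel :=
    Sum.elim (fun j => embed (bondSites j) ![p, p]) fun j => embed (bondSites j) ![q, q]
  have hH' : I • ∑ i, ((Sum.elim α β i : ℝ) : ℂ) • pauliString (t i) ∈ S := by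
    rwa [Fintype.sum_sum_type]
  have h := mem_pauliSet_of_lie_sum (i₀ := Sum.inr k) hH' hp hβ ?_ ?_
  · convert h using 1
    simp only [s, t, Sum.elim_inr, bondSites, embed_pair, Pi.single_add]
    abel
  · simp [t, hsymp, s, u, hpq, (siteL_ne_siteR k).symm]
  · rintro (j | j) hj hodd
    · have hzero (m : Fin N) : (s m).symp p = 0 := by
        by_cases hm : m = u
        · simp [s, hm, PauliLabel.symp_self]
        · simp [s, hm]
      simp [t, hsymp, hzero] at hodd
    · have hR : siteR j = u := by
        by_contra hR
        have hL : siteL j ≠ u := fun h => hj (congrArg Sum.inr (siteL_injective h))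
        simp [t, hsymp, s, hL, hR] at hodd
      convert hprev j hR ![q, p + q] (Function.ne_iff.mpr ⟨0, by simpa using hq⟩) using 1
      simp only [s, t, Sum.elim_inr, bondSites, embed_pair, hR, Pi.single_add]
      abel

/-- The commutators of `X_u` and `Y_u` with `H₀`, for `u` the left site of the bond `k`. -/
theorem mem_pauliSet_ZY_ZX {a b : Fin (N - 1) → ℝ} (hH : I • (bondSum a X + bondSum b Y) ∈ S)
    {k : Fin (N - 1)} (ha : a k ≠ 0) (hb : b k ≠ 0)
    (hX : embed (bondSites k) ![X, 0] ∈ pauliSet S) (hY : embed (bondSites k) ![Y, 0] ∈ pauliSet S)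
    (hprev : ∀ j, siteR j = siteL k → IsFullOn (pauliSet S) (bondSites j)) :
    embed (bondSites k) ![Z, Y] ∈ pauliSet S ∧ embed (bondSites k) ![Z, X] ∈ pauliSet S := by
  rw [embed_bondSites_zero_right] at hX hY
  have hZY := mem_pauliSet_of_probe (p := X) (q := Y) (by decide) hH hb hX hprev
  have hZX := mem_pauliSet_of_probe (p := Y) (q := X) (by decide) (by rwa [add_comm] at hH) ha hY
    hprev
  rw [show X + Y = Z by decide] at hZY
  rw [show Y + X = Z by decide] at hZX
  exact ⟨hZY, hZX⟩

theorem isFullOn_first_bond (h₀ : 0 < N - 1) {a b : Fin (N - 1) → ℝ}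
    (hH : I • (bondSum a X + bondSum b Y) ∈ S) (ha : a ⟨0, h₀⟩ ≠ 0) (hb : b ⟨0, h₀⟩ ≠ 0)
    (hZ₀ : Pi.single (siteL ⟨0, h₀⟩) Z ∈ pauliSet S)
    (hX₀ : Pi.single (siteL ⟨0, h₀⟩) X ∈ pauliSet S)
    (hX₁ : Pi.single (siteR ⟨0, h₀⟩) X ∈ pauliSet S) :
    IsFullOn (pauliSet S) (bondSites ⟨0, h₀⟩) := by
  have hT := (isAnticommClosed_pauliSet S).preimage_embed_bondSites ⟨0, h₀⟩
  have hX : ![X, 0] ∈ embed (bondSites ⟨0, h₀⟩) ⁻¹' pauliSet S := by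
    rwa [Set.mem_preimage, embed_bondSites_zero_right]
  have hZ : ![Z, 0] ∈ embed (bondSites ⟨0, h₀⟩) ⁻¹' pauliSet S := by
    rwa [Set.mem_preimage, embed_bondSites_zero_right]
  have hX' : ![0, X] ∈ embed (bondSites ⟨0, h₀⟩) ⁻¹' pauliSet S := by
    rwa [Set.mem_preimage, embed_bondSites_zero_left]
  have hY : ![Y, 0] ∈ embed (bondSites ⟨0, h₀⟩) ⁻¹' pauliSet S := hT.mem_of_add_eq hZ hX (by decide)
  obtain ⟨hZY, hZX⟩ := mem_pauliSet_ZY_ZX hH ha hb hX hY fun j hj => by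
    simp [siteL, siteR, Fin.ext_iff] at hj
  exact hT.forall_mem_of_two_sites hX hZ hZX hZY (hT.mem_of_add_eq hZY hX' (by decide))

theorem isFullOn_next_bond {a b : Fin (N - 1) → ℝ} (hH : I • (bondSum a X + bondSum b Y) ∈ S)
    {j k : Fin (N - 1)} (hjk : k.val = j.val + 1) (ha : a k ≠ 0) (hb : b k ≠ 0)
    (hprev : IsFullOn (pauliSet S) (bondSites j)) : IsFullOn (pauliSet S) (bondSites k) := by
  have hG := isAnticommClosed_pauliSet S
  have hRL : siteR j = siteL k := by simp [siteL, siteR, hjk]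
  have hu (p : PauliLabel) (hp : p ≠ 0) : embed (bondSites k) ![p, 0] ∈ pauliSet S := by
    rw [embed_bondSites_zero_right, ← hRL, ← embed_bondSites_zero_left]
    exact hprev _ (Function.ne_iff.mpr ⟨1, by simpa using hp⟩)
  obtain ⟨hZY, hZX⟩ := mem_pauliSet_ZY_ZX hH ha hb (hu X (by decide)) (hu Y (by decide))
    fun i hi => by
      obtain rfl : i = j := by simpa [siteL, siteR, Fin.ext_iff, hjk] using hi
      exact hprev
  set T := embed ![siteL j, siteL k, siteR k] ⁻¹' pauliSet S
  have hT : IsAnticommClosed T := hG.preimage_embed <| injective_triple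
    (by simp only [siteL, ne_eq, Fin.ext_iff, hjk]; omega)
    (by simp only [siteL, siteR, ne_eq, Fin.ext_iff, hjk]; omega)
    (siteL_ne_siteR k)
  have hleft (p q : PauliLabel) (h : ![p, q] ≠ 0) : ![p, q, 0] ∈ T := by
    simpa [T, embed_triple, embed_bondSites, hRL] using hprev ![p, q] h
  have hright (p q : PauliLabel) (h : embed (bondSites k) ![p, q] ∈ pauliSet S) :
      ![0, p, q] ∈ T := by
    simpa [T, embed_triple, embed_bondSites] using h
  have hZZ : embed (bondSites k) ![Z, Z] ∈ pauliSet S := by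
    simpa [T, embed_triple, embed_bondSites] using hT.mem_ZZ_of_three_sites
      (hleft X X (by decide)) (hleft Y X (by decide)) (hleft Z Y (by decide))
      (hleft 0 X (by decide)) (hright Z X hZX) (hright Z Y hZY)
  exact (hG.preimage_embed_bondSites k).forall_mem_of_two_sites (hu X (by decide))
    (hu Z (by decide)) hZX hZY hZZ

theorem isFullOn_bondSites (h₀ : 0 < N - 1) {a b : Fin (N - 1) → ℝ}
    (hH : I • (bondSum a X + bondSum b Y) ∈ S) (ha : ∀ j, a j ≠ 0) (hb : ∀ j, b j ≠ 0)
    (hZ₀ : Pi.single (siteL ⟨0, h₀⟩) Z ∈ pauliSet S)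
    (hX₀ : Pi.single (siteL ⟨0, h₀⟩) X ∈ pauliSet S)
    (hX₁ : Pi.single (siteR ⟨0, h₀⟩) X ∈ pauliSet S) :
    ∀ j, IsFullOn (pauliSet S) (bondSites j) := by
  rintro ⟨n, hn⟩
  induction n with
  | zero => exact isFullOn_first_bond h₀ hH (ha _) (hb _) hZ₀ hX₀ hX₁
  | succ n ih => exact isFullOn_next_bond hH (j := ⟨n, by omega⟩) rfl (ha _) (hb _) (ih _)

end Chain

/-- An XY chain (including the XX case) of length `N` with three local controls `Z_1`, `X_1`,
`X_2` on the first two spins is fully controllable: the dynamical Lie algebra is `su(2^N)`,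
the traceless skew-Hermitian matrices. -/
theorem xy_three_controls_full (N : ℕ) (hN : 2 ≤ N) (a b : Fin (N - 1) → ℝ)
    (ha : ∀ j, a j ≠ 0) (hb : ∀ j, b j ≠ 0) :
    let H₀ : Matrix (Fin N → Fin 2) (Fin N → Fin 2) ℂ :=
      ∑ j : Fin (N - 1),
        ((a j : ℂ) • twoOp (siteL j) (siteR j) PauliX PauliX +
         (b j : ℂ) • twoOp (siteL j) (siteR j) PauliY PauliY)
    let H₁ : Matrix (Fin N → Fin 2) (Fin N → Fin 2) ℂ := localOp ⟨0, by omega⟩ PauliZ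
    let H₂ : Matrix (Fin N → Fin 2) (Fin N → Fin 2) ℂ := localOp ⟨0, by omega⟩ PauliX
    let H₃ : Matrix (Fin N → Fin 2) (Fin N → Fin 2) ℂ := localOp ⟨1, by omega⟩ PauliX
    ((LieSubalgebra.lieSpan ℝ (Matrix (Fin N → Fin 2) (Fin N → Fin 2) ℂ)
        {Complex.I • H₀, Complex.I • H₁, Complex.I • H₂, Complex.I • H₃}) :
      Set (Matrix (Fin N → Fin 2) (Fin N → Fin 2) ℂ)) =
      {M | Mᴴ = -M ∧ M.trace = 0} := by
  intro H₀ H₁ H₂ H₃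
  set S := LieSubalgebra.lieSpan ℝ _ {I • H₀, I • H₁, I • H₂, I • H₃}
  have hspan {H} (hH : H ∈ ({I • H₀, I • H₁, I • H₂, I • H₃} : Set _)) : H ∈ S :=
    LieSubalgebra.subset_lieSpan hH
  have hH₀ : H₀ = bondSum a X + bondSum b Y := sum_twoOp_eq_bondSum a b
  have hall : ∀ s, s ≠ 0 → s ∈ pauliSet S :=
    (isAnticommClosed_pauliSet S).forall_mem_of_bonds hN <|
      isFullOn_bondSites (by omega) (hH₀ ▸ hspan (by simp)) ha hb
        (single_mem_pauliSet_iff.mpr (hspan (.inr (.inl rfl))))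
        (single_mem_pauliSet_iff.mpr (hspan (.inr (.inr (.inl rfl)))))
        (single_mem_pauliSet_iff.mpr (hspan (.inr (.inr (.inr rfl)))))
  ext M
  refine ⟨fun hM => show M ∈ su _ from LieSubalgebra.lieSpan_le.mpr ?_ hM,
    fun hM => mem_of_forall_smul_I_pauliString_mem (V := S.toSubmodule) hall hM.1 hM.2⟩
  rintro _ (rfl | rfl | rfl | rfl)
  · rw [hH₀, smul_add]
    exact add_mem (smul_I_bondSum_mem_su a (by decide)) (smul_I_bondSum_mem_su b (by decide))
  · exact smul_I_localOp_pauli_mem_su _ (p := Z) (by decide)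
  · exact smul_I_localOp_pauli_mem_su _ (p := X) (by decide)
  · exact smul_I_localOp_pauli_mem_su _ (p := X) (by decide)
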